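/- arXiv:1602.00255 — 2 statements merged into one kernel-verified Lean document; each statement's English description precedes it below -/
import Mathlib

section
/- The function y ↦ (tanh y + y*(1 - tanh²y)) / (2*sqrt(y*tanh y)) is strictly decreasing on (0, ∞). -/
/-!
Writing `u y = y tanh y`, the function is `u' / (2 √u)`, whose derivative is
`(2 u u'' - u'²) / (4 u √u)`. With `t = tanh y` and `s = 1 - t²` one has
`u' = t + y s` and `u'' = 2 s (1 - y t)`, so
`u'² - 2 u u'' = (t - y s)² + 4 y² t² s`, which is positive for `y > 0`.
-/

open Real Set

namespace Real

theorem tanh_pos {x : ℝ} (hx : 0 < x) : 0 < tanh x := by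
  rw [tanh_eq_sinh_div_cosh]
  exact div_pos (sinh_pos_iff.mpr hx) (cosh_pos x)

theorem hasDerivAt_tanh (x : ℝ) : HasDerivAt tanh (1 - tanh x ^ 2) x := by
  have hcosh : cosh x ≠ 0 := (cosh_pos x).ne'
  have h := (hasDerivAt_sinh x).div (hasDerivAt_cosh x) hcosh
  rw [show sinh / cosh = tanh from funext fun y => (tanh_eq_sinh_div_cosh y).symm] at h
  refine h.congr_deriv ?_
  rw [tanh_eq_sinh_div_cosh]
  field_simp

end Real

theorem hasDerivAt_div_two_sqrt {u v : ℝ → ℝ} {x a b : ℝ} (hu : HasDerivAt u a x)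
    (hv : HasDerivAt v b x) (hpos : 0 < u x) :
    HasDerivAt (fun y => v y / (2 * √(u y)))
      ((2 * u x * b - v x * a) / (4 * u x * √(u x))) x := by
  have hsqrt : 0 < √(u x) := sqrt_pos.mpr hpos
  have h := hv.fun_div ((hu.sqrt hpos.ne').const_mul 2) (by positivity)
  refine h.congr_deriv ?_
  field_simp
  rw [sq_sqrt hpos.le]
  ring

theorem strictAntiOn_div_two_sqrt {D : Set ℝ} (hD : IsOpen D) (hDc : Convex ℝ D)
    {u v u' v' : ℝ → ℝ} (hu : ∀ x ∈ D, HasDerivAt u (u' x) x)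
    (hv : ∀ x ∈ D, HasDerivAt v (v' x) x) (hpos : ∀ x ∈ D, 0 < u x)
    (hlt : ∀ x ∈ D, 2 * u x * v' x < v x * u' x) :
    StrictAntiOn (fun y => v y / (2 * √(u y))) D := by
  have hderiv := fun x (hx : x ∈ D) => hasDerivAt_div_two_sqrt (hu x hx) (hv x hx) (hpos x hx)
  refine strictAntiOn_of_hasDerivWithinAt_neg hDc
    (f' := fun x => (2 * u x * v' x - v x * u' x) / (4 * u x * √(u x)))
    (fun x hx => (hderiv x hx).continuousAt.continuousWithinAt) (fun x hx => ?_) (fun x hx => ?_)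
  · exact (hderiv x (interior_subset hx)).hasDerivWithinAt
  · rw [hD.interior_eq] at hx
    have hden : 0 < 4 * u x * √(u x) := by have := hpos x hx; positivity
    exact div_neg_of_neg_of_pos (by linarith [hlt x hx]) hden

/-- The function `y ↦ (tanh y + y(1 - tanh² y)) / (2 √(y tanh y))` is strictly
decreasing on `(0, ∞)`. -/
theorem stmt1 : StrictAntiOn
    (fun y : ℝ =>
      (Real.tanh y + y * (1 - Real.tanh y ^ 2)) / (2 * Real.sqrt (y * Real.tanh y)))
    (Set.Ioi 0) := by
  refine strictAntiOn_div_two_sqrt isOpen_Ioi (convex_Ioi 0)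
    (u' := fun y => tanh y + y * (1 - tanh y ^ 2))
    (v' := fun y => 2 * (1 - tanh y ^ 2) * (1 - y * tanh y))
    (fun x _ => ?_) (fun x _ => ?_) (fun x hx => mul_pos hx (tanh_pos hx)) (fun y hy => ?_)
  · simpa using (hasDerivAt_id' x).fun_mul (hasDerivAt_tanh x)
  · refine ((hasDerivAt_tanh x).add
      ((hasDerivAt_id' x).fun_mul (((hasDerivAt_tanh x).fun_pow 2).const_sub 1))).congr_deriv ?_
    ring
  · have ht := tanh_pos hy
    have hs : 0 < 1 - tanh y ^ 2 := sub_pos.mpr (tanh_sq_lt_one y)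
    nlinarith [sq_nonneg (tanh y - y * (1 - tanh y ^ 2)),
      mul_pos (mul_pos (mul_pos hy hy) (mul_pos ht ht)) hs]
end

section
/- The function g(y) = sqrt(y * tanh y) is strictly subadditive on positive reals: for all a, b > 0, g(a + b) < g(a) + g(b). -/
/-!
Since `√(y tanh y) = y √(tanh y / y)` and `tanh y / y` is strictly decreasing on `(0, ∞)`,
`√(a tanh a) > a √q` and `√(b tanh b) > b √q` for `s = a + b` and `q = tanh s / s`, and
`a √q + b √q = √(s tanh s)`. The monotonicity of `tanh y / y` reduces, via the addition formulas,
to that of `sinh y / y`, the slope from the origin of the strictly convex function `sinh`.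
-/

open Real Set

theorem sqrt_mul_add_lt_of_strictAntiOn_div {f : ℝ → ℝ}
    (hf : StrictAntiOn (fun x ↦ f x / x) (Ioi 0)) {a b : ℝ} (ha : 0 < a) (hb : 0 < b)
    (hab : 0 ≤ f (a + b)) :
    √((a + b) * f (a + b)) < √(a * f a) + √(b * f b) := by
  set q := f (a + b) / (a + b)
  have hq : 0 ≤ q := div_nonneg hab (by positivity)
  have sqrt_eq {x : ℝ} (hx : 0 < x) (y : ℝ) : √(x * y) = x * √(y / x) := by
    rw [← sqrt_sq hx.le, ← sqrt_mul (sq_nonneg x), sqrt_sq hx.le]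
    congr 1
    field_simp
  have below {x : ℝ} (hx : 0 < x) (hxs : x < a + b) : x * √q < √(x * f x) := by
    rw [sqrt_eq hx]
    exact mul_lt_mul_of_pos_left (sqrt_lt_sqrt hq (hf hx (by positivity : 0 < a + b) hxs)) hx
  calc √((a + b) * f (a + b)) = a * √q + b * √q := by rw [sqrt_eq (by positivity)]; ring
    _ < √(a * f a) + √(b * f b) := add_lt_add (below ha (by linarith)) (below hb (by linarith))

theorem Real.strictConvexOn_sinh : StrictConvexOn ℝ (Ici 0) sinh :=
  StrictMonoOn.strictConvexOn_of_deriv (convex_Ici 0) continuous_sinh.continuousOn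
    (by rw [deriv_sinh]; exact cosh_strictMonoOn.mono interior_subset)

theorem Real.sinh_div_self_strictMonoOn : StrictMonoOn (fun x ↦ sinh x / x) (Ioi 0) := by
  intro x hx y hy hxy
  simpa using strictConvexOn_sinh.secant_strict_mono (a := 0) self_mem_Ici
    (Ioi_subset_Ici_self hx) (Ioi_subset_Ici_self hy) (ne_of_gt hx) (ne_of_gt hy) hxy

theorem Real.tanh_div_self_strictAntiOn : StrictAntiOn (fun x ↦ tanh x / x) (Ioi 0) := by
  intro a (ha : 0 < a) s (hs : 0 < s) has
  have key := sinh_div_self_strictMonoOn (sub_pos.2 has) (by positivity : 0 < s + a) (by linarith)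
  -- expanding `sinh (s ± a)` and clearing denominators, this is `a sinh s cosh a < s cosh s sinh a`
  simp only [sinh_sub, sinh_add] at key
  simp only [tanh_eq_sinh_div_cosh, div_div]
  rw [div_lt_div_iff₀ (by positivity) (by positivity)] at key ⊢
  linarith

/-- `g(y) = √(y tanh y)` is strictly subadditive on positive reals. -/
theorem stmt2 (a b : ℝ) (ha : 0 < a) (hb : 0 < b) :
    Real.sqrt ((a + b) * Real.tanh (a + b)) <
      Real.sqrt (a * Real.tanh a) + Real.sqrt (b * Real.tanh b) :=
  sqrt_mul_add_lt_of_strictAntiOn_div tanh_div_self_strictAntiOn ha hb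
    (by rw [tanh_eq_sinh_div_cosh]
        exact div_nonneg (sinh_nonneg_iff.2 (by positivity)) (cosh_pos _).le)
end
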